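/- Let (A, ≻, ≺, Δ_{≻,r}, Δ_{≺,r}) be a factorizable anti-dendriform bialgebra. Then every x ∈ A has a unique decomposition x = x₁ - x₂ with (x₁, x₂) ∈ Im(T_r ⊕ T_{τ(r)}), where T_r ⊕ T_{τ(r)} : A* → A⊕A sends ζ to (T_r(ζ), -T_{τ(r)}(ζ)); explicitly x₁ = T_r T_{r+τ(r)}⁻¹(x) and x₂ = -T_{τ(r)} T_{r+τ(r)}⁻¹(x). -/
import Mathlib


open TensorProduct

set_option synthInstance.maxHeartbeats 1000000
set_option maxHeartbeats 1600000

variable {K : Type*} [Field K]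

/-- The anti-dendriform algebra identities for two bilinear operations `s` (≻) and `p` (≺):
`x≻(y≻z) = -(x·y)≻z = -x≺(y·z) = (x≺y)≺z` and `(x≻y)≺z = x≻(y≺z)`, where `x·y = x≻y + x≺y`. -/
def IsAntiDend {M : Type*} [AddCommGroup M] [Module K M]
    (s p : M →ₗ[K] M →ₗ[K] M) : Prop :=
  ∀ x y z : M,
    s x (s y z) = - s (s x y + p x y) z ∧
    s x (s y z) = - p x (s y z + p y z) ∧
    s x (s y z) = p (p x y) z ∧
    p (s x y) z = s x (p y z)

/-- The bilinear map `a ⊗ b ↦ (ζ ↦ ζ(a) • b)` used to define `T_r`. -/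
noncomputable def Tbil {M : Type*} [AddCommGroup M] [Module K M] :
    M →ₗ[K] M →ₗ[K] (Module.Dual K M →ₗ[K] M) :=
  LinearMap.mk₂ K (fun a b => (Module.Dual.eval K M a).smulRight b)
    (fun a a' b => by ext ζ; simp [add_smul])
    (fun c a b => by
      ext ζ
      simp only [LinearMap.smulRight_apply, LinearMap.smul_apply, map_smul,
        Module.Dual.eval_apply, smul_eq_mul, mul_smul])
    (fun a b b' => by ext ζ; simp)
    (fun c a b => by
      ext ζ
      simp only [LinearMap.smulRight_apply, LinearMap.smul_apply]
      exact smul_comm _ _ _)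

/-- `T_r : A* → A`, `⟨T_r ζ, η⟩ = ⟨r, ζ ⊗ η⟩`; concretely `T_r ζ = Σ ζ(aᵢ) • bᵢ`
for `r = Σ aᵢ ⊗ bᵢ`. -/
noncomputable def TmL {M : Type*} [AddCommGroup M] [Module K M] (r : M ⊗[K] M) :
    Module.Dual K M →ₗ[K] M :=
  TensorProduct.lift Tbil r

/-- The flip `τ : A ⊗ A → A ⊗ A`. -/
noncomputable def tau {M : Type*} [AddCommGroup M] [Module K M] (r : M ⊗[K] M) : M ⊗[K] M :=
  TensorProduct.comm K M M r

/-- `r` is invariant: `(R_≺(x)⊗I + I⊗L_·(x)) r = 0` and `(R_·(x)⊗I + I⊗L_≻(x)) r = 0`. -/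
def Invariant {M : Type*} [AddCommGroup M] [Module K M]
    (s p : M →ₗ[K] M →ₗ[K] M) (r : M ⊗[K] M) : Prop :=
  ∀ x : M,
    TensorProduct.map (p.flip x) (LinearMap.id : M →ₗ[K] M) r
      + TensorProduct.map (LinearMap.id : M →ₗ[K] M) ((s + p) x) r = 0 ∧
    TensorProduct.map ((s + p).flip x) (LinearMap.id : M →ₗ[K] M) r
      + TensorProduct.map (LinearMap.id : M →ₗ[K] M) (s x) r = 0

/-- `(a⊗b)⊗(c⊗d) ↦ (m a c) ⊗ b ⊗ d` : the product is placed in the first tensor slot,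
giving `r₁₂ ∗ r₁₃` when applied to `r ⊗ r`. -/
noncomputable def place1 {M : Type*} [AddCommGroup M] [Module K M]
    (m : M →ₗ[K] M →ₗ[K] M) :
    (M ⊗[K] M) ⊗[K] (M ⊗[K] M) →ₗ[K] M ⊗[K] (M ⊗[K] M) :=
  (TensorProduct.map (TensorProduct.lift m)
      (LinearMap.id : M ⊗[K] M →ₗ[K] M ⊗[K] M)) ∘ₗ
    (TensorProduct.tensorTensorTensorComm K M M M M).toLinearMap

/-- `(a⊗b)⊗(c⊗d) ↦ c ⊗ (m a d) ⊗ b` : the product in the second slot, giving `r₂₃ ∗ r₁₂`. -/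
noncomputable def place2 {M : Type*} [AddCommGroup M] [Module K M]
    (m : M →ₗ[K] M →ₗ[K] M) :
    (M ⊗[K] M) ⊗[K] (M ⊗[K] M) →ₗ[K] M ⊗[K] (M ⊗[K] M) :=
  (TensorProduct.leftComm K M M M).toLinearMap ∘ₗ
  (TensorProduct.map (LinearMap.id : M →ₗ[K] M) (TensorProduct.comm K M M).toLinearMap) ∘ₗ
  (TensorProduct.map (TensorProduct.lift m)
      (LinearMap.id : M ⊗[K] M →ₗ[K] M ⊗[K] M)) ∘ₗ
  (TensorProduct.tensorTensorTensorComm K M M M M).toLinearMap ∘ₗ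
  (TensorProduct.congr (LinearEquiv.refl K (M ⊗[K] M)) (TensorProduct.comm K M M)).toLinearMap

/-- `(a⊗b)⊗(c⊗d) ↦ a ⊗ c ⊗ (m b d)` : the product in the third slot, giving `r₁₃ ∗ r₂₃`. -/
noncomputable def place3 {M : Type*} [AddCommGroup M] [Module K M]
    (m : M →ₗ[K] M →ₗ[K] M) :
    (M ⊗[K] M) ⊗[K] (M ⊗[K] M) →ₗ[K] M ⊗[K] (M ⊗[K] M) :=
  (TensorProduct.assoc K M M M).toLinearMap ∘ₗ
  (TensorProduct.map (LinearMap.id : M ⊗[K] M →ₗ[K] M ⊗[K] M) (TensorProduct.lift m)) ∘ₗ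
  (TensorProduct.tensorTensorTensorComm K M M M M).toLinearMap

/-- `D(r) = r₁₂·r₁₃ + r₂₃≻r₁₂ - r₁₃≺r₂₃`. -/
noncomputable def adD {M : Type*} [AddCommGroup M] [Module K M]
    (s p : M →ₗ[K] M →ₗ[K] M) (r : M ⊗[K] M) : M ⊗[K] (M ⊗[K] M) :=
  place1 (s + p) (r ⊗ₜ[K] r) + place2 s (r ⊗ₜ[K] r) - place3 p (r ⊗ₜ[K] r)

/-- `D₁(r) = r₂₃·r₁₂ + r₁₃≻r₂₃ + r₁₂≺r₁₃`. -/
noncomputable def adD1 {M : Type*} [AddCommGroup M] [Module K M]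
    (s p : M →ₗ[K] M →ₗ[K] M) (r : M ⊗[K] M) : M ⊗[K] (M ⊗[K] M) :=
  place2 (s + p) (r ⊗ₜ[K] r) + place3 s (r ⊗ₜ[K] r) + place1 p (r ⊗ₜ[K] r)

/-- `D₂(r) = r₁₃·r₂₃ - r₁₂≻r₁₃ + r₂₃≺r₁₂`. -/
noncomputable def adD2 {M : Type*} [AddCommGroup M] [Module K M]
    (s p : M →ₗ[K] M →ₗ[K] M) (r : M ⊗[K] M) : M ⊗[K] (M ⊗[K] M) :=
  place3 (s + p) (r ⊗ₜ[K] r) - place1 s (r ⊗ₜ[K] r) + place2 p (r ⊗ₜ[K] r)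

/-- The anti-dendriform Yang-Baxter equation `D(r) = 0`. -/
noncomputable def AYBE {M : Type*} [AddCommGroup M] [Module K M]
    (s p : M →ₗ[K] M →ₗ[K] M) (r : M ⊗[K] M) : Prop :=
  adD s p r = 0

variable {A : Type*} [AddCommGroup A] [Module K A]

/-- for a factorizable anti-dendriform bialgebra (i.e. `r` solves the
AD-YBE, `r + τ(r)` is invariant and `T_{r+τ(r)}` is bijective), every `x ∈ A` has a
unique decomposition `x = x₁ - x₂` with `(x₁, x₂) ∈ Im(T_r ⊕ T_{τ(r)})`; explicitly
`x₁ = T_r(ζ)`, `x₂ = -T_{τ(r)}(ζ)` for the `ζ` with `T_{r+τ(r)}(ζ) = x`. -/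
theorem stmt12 [FiniteDimensional K A]
    (s p : A →ₗ[K] A →ₗ[K] A) (h : IsAntiDend s p) (r : A ⊗[K] A)
    (hy : AYBE s p r) (hinv : Invariant s p (r + tau r))
    (hbij : Function.Bijective (TmL (r + tau r))) :
    ∀ x : A,
      (∃! q : A × A,
        (∃ ζ : Module.Dual K A, q = (TmL r ζ, - TmL (tau r) ζ)) ∧ x = q.1 - q.2) ∧
      ∀ ζ : Module.Dual K A, TmL (r + tau r) ζ = x →
        x = TmL r ζ - (- TmL (tau r) ζ) := by
  have key : ∀ ζ : Module.Dual K A, TmL (r + tau r) ζ = TmL r ζ + TmL (tau r) ζ := by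
    intro ζ
    simp [TmL, map_add]
  intro x
  obtain ⟨ζ₀, hζ₀⟩ := hbij.surjective x
  constructor
  · refine ⟨(TmL r ζ₀, - TmL (tau r) ζ₀), ⟨⟨ζ₀, rfl⟩, ?_⟩, ?_⟩
    · simp [← hζ₀, key, sub_neg_eq_add]
    · rintro ⟨a, b⟩ ⟨⟨ζ, hζ⟩, hx⟩
      simp only [Prod.mk.injEq] at hζ
      obtain ⟨ha, hb⟩ := hζ
      subst ha hb
      simp only [sub_neg_eq_add] at hx
      have : TmL (r + tau r) ζ = TmL (r + tau r) ζ₀ := by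
        rw [key, ← hx, ← hζ₀]
      have := hbij.injective this
      subst this
      rfl
  · intro ζ hζ
    rw [key] at hζ
    rw [← hζ]
    abel
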